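/- Let V ∈ U(n−1), τ, σ ∈ ℂ^{n−1}, t, s ∈ ℝ. Then the Heisenberg isometry R_V T_{(σ,s)} commutes with the Heisenberg translation T_{(τ,t)} if and only if Vτ = τ and Im(τᴴσ) = 0. -/

import Mathlib

open Matrix Complex

/-- Index type for block matrices with blocks of sizes `1, m, 1` (so `m = n - 1`
and the total size is `n + 1`). -/
abbrev Idx (m : ℕ) : Type := Unit ⊕ (Fin m ⊕ Unit)

/-- The Heisenberg rotation `R_U = diag(1, U, 1)`. -/
noncomputable def RU {m : ℕ} (U : Matrix (Fin m) (Fin m) ℂ) : Matrix (Idx m) (Idx m) ℂ :=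
  Matrix.of fun i j =>
    match i, j with
    | Sum.inl _, Sum.inl _ => 1
    | Sum.inr (Sum.inl k), Sum.inr (Sum.inl l) => U k l
    | Sum.inr (Sum.inr _), Sum.inr (Sum.inr _) => 1
    | _, _ => 0

/-- The Heisenberg translation
`T_{(τ,t)} = [[1, −τᴴ, (−|τ|²+it)/2], [0, I, τ], [0, 0, 1]]`. -/
noncomputable def Htr {m : ℕ} (τ : Fin m → ℂ) (t : ℝ) : Matrix (Idx m) (Idx m) ℂ :=
  Matrix.of fun i j =>
    match i, j with
    | Sum.inl _, Sum.inl _ => 1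
    | Sum.inl _, Sum.inr (Sum.inl l) => -((starRingEnd ℂ) (τ l))
    | Sum.inl _, Sum.inr (Sum.inr _) =>
        (-(((∑ k, Complex.normSq (τ k) : ℝ)) : ℂ) + (t : ℂ) * Complex.I) / 2
    | Sum.inr (Sum.inl k), Sum.inr (Sum.inl l) => if k = l then 1 else 0
    | Sum.inr (Sum.inl k), Sum.inr (Sum.inr _) => τ k
    | Sum.inr (Sum.inr _), Sum.inr (Sum.inr _) => 1
    | _, _ => 0

/-- The Heisenberg dilation `D_r = diag(r, I, 1/r)`. -/
noncomputable def Dil {m : ℕ} (r : ℝ) : Matrix (Idx m) (Idx m) ℂ :=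
  Matrix.of fun i j =>
    match i, j with
    | Sum.inl _, Sum.inl _ => (r : ℂ)
    | Sum.inr (Sum.inl k), Sum.inr (Sum.inl l) => if k = l then 1 else 0
    | Sum.inr (Sum.inr _), Sum.inr (Sum.inr _) => ((r : ℂ))⁻¹
    | _, _ => 0

/-- The block diagonal matrix `diag(μ, A, λ)`. -/
noncomputable def diagM {m : ℕ} (μ : ℂ) (A : Matrix (Fin m) (Fin m) ℂ) (lam : ℂ) :
    Matrix (Idx m) (Idx m) ℂ :=
  Matrix.of fun i j =>
    match i, j with
    | Sum.inl _, Sum.inl _ => μ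
    | Sum.inr (Sum.inl k), Sum.inr (Sum.inl l) => A k l
    | Sum.inr (Sum.inr _), Sum.inr (Sum.inr _) => lam
    | _, _ => 0

/-- The matrix `J = [[0,0,1],[0,I,0],[1,0,0]]` of the second Hermitian form. -/
noncomputable def Jm (m : ℕ) : Matrix (Idx m) (Idx m) ℂ :=
  Matrix.of fun i j =>
    match i, j with
    | Sum.inl _, Sum.inr (Sum.inr _) => 1
    | Sum.inr (Sum.inr _), Sum.inl _ => 1
    | Sum.inr (Sum.inl k), Sum.inr (Sum.inl l) => if k = l then 1 else 0
    | _, _ => 0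

/-- The second Hermitian form `⟨z,w⟩ = wᴴ J z` of signature `(n,1)`. -/
noncomputable def hermJ {m : ℕ} (z w : Idx m → ℂ) : ℂ :=
  dotProduct (star w) ((Jm m).mulVec z)

/-- Membership in `U(n,1)` for the second Hermitian form: `g ∈ GL` and `gᴴ J g = J`. -/
def InU2 {m : ℕ} (g : Matrix (Idx m) (Idx m) ℂ) : Prop :=
  IsUnit g ∧ gᴴ * Jm m * g = Jm m

/-- The vector `e₁ = (1,0,…,0)ᵗ` (representing the boundary point `∞`). -/
noncomputable def e1 (m : ℕ) : Idx m → ℂ := fun i =>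
  match i with
  | Sum.inl _ => 1
  | _ => 0

/-- The vector `e_{n+1} = (0,…,0,1)ᵗ` (representing the boundary point `o`). -/
noncomputable def elast (m : ℕ) : Idx m → ℂ := fun i =>
  match i with
  | Sum.inr (Sum.inr _) => 1
  | _ => 0

/-- `dotc x y = xᴴ y = ∑ conj(xₖ) yₖ`. -/
noncomputable def dotc {m : ℕ} (x y : Fin m → ℂ) : ℂ :=
  ∑ k, (starRingEnd ℂ) (x k) * y k

/-- A matrix is diagonalizable if it is conjugate (in `GL`) to a diagonal matrix. -/
def IsDiagonalizable {N : Type*} [Fintype N] [DecidableEq N] (A : Matrix N N ℂ) : Prop :=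
  ∃ P : Matrix N N ℂ, IsUnit P.det ∧ (P⁻¹ * A * P).IsDiag

/-!
Both matrices are block upper unitriangular, `[[1, a, c], [0, A, b], [0, 0, 1]]`, and such
matrices multiply blockwise by an explicit formula. Comparing the blocks of the two products,
`R_V T_σ` commutes with `T_τ` iff `τᴴ V = τᴴ`, `V τ = τ` and `σᴴ τ = τᴴ V σ`. For unitary `V`,
`V τ = τ` gives `Vᴴ τ = τ`, hence `τᴴ V = τᴴ`, and the last condition becomes `σᴴ τ = τᴴ σ`,
i.e. `τᴴ σ` is real.
-/

section BlockUpper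

variable {m : ℕ} {R : Type*} [Semiring R]

def blockUpper (a : Fin m → R) (A : Matrix (Fin m) (Fin m) R) (b : Fin m → R) (c : R) :
    Matrix (Idx m) (Idx m) R :=
  Matrix.of fun i j =>
    match i, j with
    | Sum.inl _, Sum.inl _ => 1
    | Sum.inl _, Sum.inr (Sum.inl l) => a l
    | Sum.inl _, Sum.inr (Sum.inr _) => c
    | Sum.inr (Sum.inl k), Sum.inr (Sum.inl l) => A k l
    | Sum.inr (Sum.inl k), Sum.inr (Sum.inr _) => b k
    | Sum.inr (Sum.inr _), Sum.inr (Sum.inr _) => 1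
    | _, _ => 0

theorem blockUpper_mul_blockUpper (a a' : Fin m → R) (A A' : Matrix (Fin m) (Fin m) R)
    (b b' : Fin m → R) (c c' : R) :
    blockUpper a A b c * blockUpper a' A' b' c' =
      blockUpper (a' + a ᵥ* A') (A * A') (A *ᵥ b' + b) (c' + a ⬝ᵥ b' + c) := by
  ext (_ | k | _) (_ | l | _) <;>
    simp [blockUpper, mul_apply, Fintype.sum_sum_type, vecMul, mulVec, dotProduct, add_assoc]

theorem blockUpper_inj {a a' : Fin m → R} {A A' : Matrix (Fin m) (Fin m) R}
    {b b' : Fin m → R} {c c' : R} :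
    blockUpper a A b c = blockUpper a' A' b' c' ↔ a = a' ∧ A = A' ∧ b = b' ∧ c = c' := by
  refine ⟨fun h => ⟨?_, ?_, ?_, ?_⟩, by rintro ⟨rfl, rfl, rfl, rfl⟩; rfl⟩
  · funext l; exact congrFun (congrFun h (Sum.inl ())) (Sum.inr (Sum.inl l))
  · ext k l; exact congrFun (congrFun h (Sum.inr (Sum.inl k))) (Sum.inr (Sum.inl l))
  · funext k; exact congrFun (congrFun h (Sum.inr (Sum.inl k))) (Sum.inr (Sum.inr ()))
  · exact congrFun (congrFun h (Sum.inl ())) (Sum.inr (Sum.inr ()))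

end BlockUpper

section Unitary

variable {n α : Type*} [Fintype n] [DecidableEq n] [CommRing α] [StarRing α]
  {U : Matrix n n α} {v : n → α}

theorem conjTranspose_mulVec_eq_self_of_mulVec_eq_self (hU : U ∈ unitaryGroup n α)
    (hv : U *ᵥ v = v) : Uᴴ *ᵥ v = v := by
  conv_lhs => rw [← hv]
  rw [mulVec_mulVec, ← star_eq_conjTranspose, mem_unitaryGroup_iff'.mp hU, one_mulVec]

theorem star_vecMul_eq_star_of_mulVec_eq_self (hU : U ∈ unitaryGroup n α)
    (hv : U *ᵥ v = v) : star v ᵥ* U = star v := by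
  rw [← conjTranspose_conjTranspose U, vecMul_conjTranspose, star_star,
    conjTranspose_mulVec_eq_self_of_mulVec_eq_self hU hv]

end Unitary

section Heisenberg

variable {m : ℕ}

theorem RU_eq_blockUpper (U : Matrix (Fin m) (Fin m) ℂ) : RU U = blockUpper 0 U 0 0 := by
  ext (_ | k | _) (_ | l | _) <;> rfl

theorem Htr_eq_blockUpper (τ : Fin m → ℂ) (t : ℝ) :
    Htr τ t = blockUpper (-star τ) 1 τ
      ((-(((∑ k, Complex.normSq (τ k) : ℝ)) : ℂ) + (t : ℂ) * Complex.I) / 2) := by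
  ext (_ | k | _) (_ | l | _) <;> rfl

theorem dotc_im_eq_zero_iff (τ σ : Fin m → ℂ) :
    (dotc τ σ).im = 0 ↔ star σ ⬝ᵥ τ = star τ ⬝ᵥ σ := by
  rw [star_dotProduct, ← conj_eq_iff_im]
  rfl

theorem commute_RU_mul_Htr_Htr_iff (V : Matrix (Fin m) (Fin m) ℂ) (τ σ : Fin m → ℂ) (t s : ℝ) :
    Commute (RU V * Htr σ s) (Htr τ t) ↔
      star τ ᵥ* V = star τ ∧ V *ᵥ τ = τ ∧ star σ ⬝ᵥ τ = star τ ⬝ᵥ (V *ᵥ σ) := by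
  simp only [Commute, SemiconjBy, RU_eq_blockUpper, Htr_eq_blockUpper,
    blockUpper_mul_blockUpper, blockUpper_inj, vecMul_one, mul_one, one_mul, one_mulVec,
    add_zero, zero_dotProduct, neg_dotProduct, true_and]
  refine and_congr ?_ (and_congr ?_ ?_)
  · rw [add_comm, add_right_inj, neg_vecMul, neg_inj, eq_comm]
  · rw [add_comm, add_right_inj]
  · constructor <;> intro h <;> linear_combination -h

end Heisenberg

theorem heisenberg_isometry_commutes_with_translation_iff_general {m : ℕ}
    (V : Matrix (Fin m) (Fin m) ℂ) (hV : V ∈ Matrix.unitaryGroup (Fin m) ℂ)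
    (τ σ : Fin m → ℂ) (t s : ℝ) :
    (RU V * Htr σ s) * Htr τ t = Htr τ t * (RU V * Htr σ s) ↔
      V.mulVec τ = τ ∧ (dotc τ σ).im = 0 := by
  refine (commute_RU_mul_Htr_Htr_iff V τ σ t s).trans ?_
  rw [dotc_im_eq_zero_iff]
  constructor
  · rintro ⟨-, hτ, hστ⟩
    rw [hστ, dotProduct_mulVec, star_vecMul_eq_star_of_mulVec_eq_self hV hτ]
    exact ⟨hτ, rfl⟩
  · rintro ⟨hτ, hστ⟩
    have hτV := star_vecMul_eq_star_of_mulVec_eq_self hV hτ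
    exact ⟨hτV, hτ, by rw [dotProduct_mulVec, hτV, hστ]⟩

theorem heisenberg_isometry_commutes_with_translation_iff {m : ℕ} (hm : 1 ≤ m)
    (V : Matrix (Fin m) (Fin m) ℂ) (hV : V ∈ Matrix.unitaryGroup (Fin m) ℂ)
    (τ σ : Fin m → ℂ) (t s : ℝ) :
    (RU V * Htr σ s) * Htr τ t = Htr τ t * (RU V * Htr σ s) ↔
      V.mulVec τ = τ ∧ (dotc τ σ).im = 0 :=
  heisenberg_isometry_commutes_with_translation_iff_general V hV τ σ t s
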